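/- Let n ≥ 3 and let A be a primitive (0,1) companion matrix of order n with zero trace (a_{n,n} = 0). Then exp(A:n) < exp(A:n-1) < ... < exp(A:1), and consequently exp(A) = exp(A:1). -/

import Mathlib

open Matrix BigOperators

/-- A nonnegative square matrix is primitive if some positive power has all entries positive. -/
def IsPrimitive {n : ℕ} (A : Matrix (Fin n) (Fin n) ℝ) : Prop :=
  ∃ m : ℕ, 0 < m ∧ ∀ i j, 0 < (A ^ m) i j

/-- The exponent of a primitive matrix: the least positive `m` with `A ^ m > 0`. -/
noncomputable def matExp {n : ℕ} (A : Matrix (Fin n) (Fin n) ℝ) : ℕ :=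
  sInf {m : ℕ | 0 < m ∧ ∀ i j, 0 < (A ^ m) i j}

/-- `(0,1)` companion matrix: superdiagonal ones on the first `n-1` rows,
arbitrary `(0,1)` last row, all other entries zero. -/
def IsCompanion {n : ℕ} (A : Matrix (Fin n) (Fin n) ℝ) : Prop :=
  (∀ i j, A i j = 0 ∨ A i j = 1) ∧
  (∀ i j : Fin n, (i : ℕ) + 1 < n → (A i j = 1 ↔ (j : ℕ) = (i : ℕ) + 1))

/-- `exp(A:i,j)`: least positive `k` such that `(A^l) i j > 0` for all `l ≥ k`. -/
noncomputable def expIJ {n : ℕ} (A : Matrix (Fin n) (Fin n) ℝ) (i j : Fin n) : ℕ :=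
  sInf {k : ℕ | 0 < k ∧ ∀ l, k ≤ l → 0 < (A ^ l) i j}

/-- `exp(A:i)`: least positive `p` such that every entry of row `i` of `A ^ p` is positive. -/
noncomputable def expRow {n : ℕ} (A : Matrix (Fin n) (Fin n) ℝ) (i : Fin n) : ℕ :=
  sInf {p : ℕ | 0 < p ∧ ∀ j, 0 < (A ^ p) i j}

/-- The digraph of `A` has an elementary cycle of length `k`. -/
def HasElemCycle {n : ℕ} (A : Matrix (Fin n) (Fin n) ℝ) (k : ℕ) : Prop :=
  0 < k ∧ ∃ c : ℕ → Fin n, c k = c 0 ∧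
    (∀ i j, i < k → j < k → c i = c j → i = j) ∧
    ∀ i < k, A (c i) (c (i + 1)) = 1

/-- `m(U)`: the maximal length of a run of consecutive integers contained in `U`. -/
noncomputable def runMax (U : Set ℕ) : ℕ :=
  sSup {k : ℕ | ∃ a : ℕ, ∀ t < k, a + t ∈ U}

/-- The Frobenius number of a set `L`: the least `N` such that every `m ≥ N` is a
nonnegative integer combination of elements of `L`. -/
noncomputable def frobNum (L : Set ℕ) : ℕ :=
  sInf {N : ℕ | ∀ m, N ≤ m → m ∈ AddSubmonoid.closure L}

/-- Irreducibility: for all `i j` there is a walk of some positive length from `i` to `j`. -/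
def IsIrreducibleMat {n : ℕ} (A : Matrix (Fin n) (Fin n) ℝ) : Prop :=
  ∀ i j, ∃ k : ℕ, 0 < k ∧ 0 < (A ^ k) i j

/-! For `i + 1 < n`, row `i` of a companion matrix is the unit vector `e_{i+1}`, so row `i` of
`A ^ (p + 1)` is row `i + 1` of `A ^ p`; hence `exp(A:i) = exp(A:i+1) + 1`, i.e. `exp(A:i) + i = exp(A:0)`.
Row positivity persists under further multiplication by `A`, because a primitive matrix has no
zero column, so the rows with smaller exponent are positive by the time row `0` is. -/

section Nonneg

variable {ι : Type*} [Fintype ι] [DecidableEq ι] {A : Matrix ι ι ℝ}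

theorem pow_succ_apply_pos (hA : ∀ i j, 0 ≤ A i j) (hcol : ∀ j, ∃ k, A k j ≠ 0) {l : ℕ}
    {i : ι} (h : ∀ j, 0 < (A ^ l) i j) (j : ι) : 0 < (A ^ (l + 1)) i j := by
  obtain ⟨k, hk⟩ := hcol j
  rw [pow_succ, mul_apply]
  calc (0 : ℝ) < (A ^ l) i k * A k j := mul_pos (h k) ((hA k j).lt_of_ne' hk)
    _ ≤ ∑ k, (A ^ l) i k * A k j :=
      Finset.single_le_sum (fun k _ => mul_nonneg (pow_apply_nonneg hA l i k) (hA k j))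
        (Finset.mem_univ k)

theorem pow_apply_pos_of_le (hA : ∀ i j, 0 ≤ A i j) (hcol : ∀ j, ∃ k, A k j ≠ 0) {l l' : ℕ}
    {i : ι} (hl : l ≤ l') (h : ∀ j, 0 < (A ^ l) i j) : ∀ j, 0 < (A ^ l') i j := by
  induction l', hl using Nat.le_induction with
  | base => exact h
  | succ l' _ ih => exact pow_succ_apply_pos hA hcol ih

end Nonneg

variable {n : ℕ} {A : Matrix (Fin n) (Fin n) ℝ}

namespace IsPrimitive

theorem exists_apply_ne_zero (hP : _root_.IsPrimitive A) (j : Fin n) : ∃ k, A k j ≠ 0 := by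
  obtain ⟨m, hm, hpos⟩ := hP
  have hsum : ∑ k, (A ^ (m - 1)) j k * A k j ≠ 0 := by
    rw [← mul_apply, ← pow_succ, Nat.sub_add_cancel hm]
    exact (hpos j j).ne'
  obtain ⟨k, -, hk⟩ := Finset.exists_ne_zero_of_sum_ne_zero hsum
  exact ⟨k, right_ne_zero_of_mul hk⟩

theorem expRow_spec (hP : _root_.IsPrimitive A) (i : Fin n) :
    0 < expRow A i ∧ ∀ j, 0 < (A ^ expRow A i) i j := by
  obtain ⟨m, hm, hpos⟩ := hP
  exact Nat.sInf_mem (s := {p | 0 < p ∧ ∀ j, 0 < (A ^ p) i j}) ⟨m, hm, hpos i⟩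

theorem matExp_spec (hP : _root_.IsPrimitive A) : 0 < matExp A ∧ ∀ i j, 0 < (A ^ matExp A) i j :=
  Nat.sInf_mem hP

theorem matExp_eq_expRow (hA : ∀ i j, 0 ≤ A i j) (hP : _root_.IsPrimitive A) (i₀ : Fin n)
    (hmax : ∀ i, expRow A i ≤ expRow A i₀) : matExp A = expRow A i₀ := by
  apply le_antisymm
  · refine Nat.sInf_le ⟨(hP.expRow_spec i₀).1, fun i => ?_⟩
    exact pow_apply_pos_of_le hA hP.exists_apply_ne_zero (hmax i) (hP.expRow_spec i).2
  · exact Nat.sInf_le ⟨hP.matExp_spec.1, hP.matExp_spec.2 i₀⟩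

end IsPrimitive

namespace IsCompanion

theorem nonneg (hA : IsCompanion A) (i j : Fin n) : 0 ≤ A i j := by
  rcases hA.1 i j with h | h <;> norm_num [h]

theorem apply_eq_ite (hA : IsCompanion A) {i : ℕ} (hi : i + 1 < n) (k : Fin n) :
    A ⟨i, by omega⟩ k = if k = ⟨i + 1, hi⟩ then 1 else 0 := by
  have h := hA.2 ⟨i, by omega⟩ k hi
  split_ifs with hk
  · exact h.2 (congrArg Fin.val hk)
  · exact (hA.1 _ k).resolve_right fun h1 => hk (Fin.ext (h.1 h1))

theorem pow_succ_apply (hA : IsCompanion A) {i : ℕ} (hi : i + 1 < n) (p : ℕ) (j : Fin n) :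
    (A ^ (p + 1)) ⟨i, by omega⟩ j = (A ^ p) ⟨i + 1, hi⟩ j := by
  simp [pow_succ', mul_apply, hA.apply_eq_ite hi]

theorem expRow_eq_succ (hA : IsCompanion A) (hP : _root_.IsPrimitive A) {i : ℕ} (hi : i + 1 < n) :
    expRow A ⟨i, by omega⟩ = expRow A ⟨i + 1, hi⟩ + 1 := by
  have hshift := Nat.sInf_add (n := 1) (p := fun p => 0 < p ∧ ∀ j, 0 < (A ^ p) ⟨i, by omega⟩ j)
    (hP.expRow_spec ⟨i, by omega⟩).1
  unfold expRow
  rw [← hshift]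
  congr 2
  ext p
  simp only [Set.mem_ofPred_eq, hA.pow_succ_apply hi, Nat.succ_pos, true_and,
    iff_and_self]
  intro hrow
  -- `p = 0` is excluded: row `i + 1 ≠ 0` of `A ^ 0 = 1` vanishes in column `0`
  refine Nat.pos_of_ne_zero fun hp => ?_
  have h0 := hrow ⟨0, by omega⟩
  simp [hp, one_apply] at h0

theorem expRow_add_val (hA : IsCompanion A) (hP : _root_.IsPrimitive A) (i : Fin n) :
    expRow A i + i = expRow A ⟨0, i.pos⟩ := by
  obtain ⟨i, hi⟩ := i
  induction i with
  | zero => rfl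
  | succ i ih =>
    rw [← ih (by omega), hA.expRow_eq_succ hP hi, Fin.val_mk, Fin.val_mk]
    omega

theorem expRow_strictAnti (hA : IsCompanion A) (hP : _root_.IsPrimitive A) :
    StrictAnti (expRow A) := fun i j hij => by
  have hi := hA.expRow_add_val hP i
  have hj := hA.expRow_add_val hP j
  rw [Fin.lt_def] at hij
  omega

end IsCompanion

theorem stmt9 {n : ℕ} (hn : 3 ≤ n) (A : Matrix (Fin n) (Fin n) ℝ)
    (hA : IsCompanion A) (hP : _root_.IsPrimitive A) :
    (∀ i j : Fin n, i < j → expRow A j < expRow A i) ∧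
      matExp A = expRow A ⟨0, by omega⟩ :=
  ⟨hA.expRow_strictAnti hP, hP.matExp_eq_expRow hA.nonneg _ fun i =>
    (hA.expRow_strictAnti hP).antitone (Nat.zero_le i.val)⟩
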